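/- Let E₁, E₂ be spectral measures on Hilbert spaces H₁, H₂ and let Φ admit a Haagerup representation Φ(x,y) = Σₙ φₙ(x)ψₙ(y) with Σ|φₙ|² ≤ a², Σ|ψₙ|² ≤ b². Then the transformer Q ↦ ∬ Φ dE₁ Q dE₂ := Σₙ (∫φₙ dE₁) Q (∫ψₙ dE₂) maps the trace class S₁ into itself with ‖∬ Φ dE₁ Q dE₂‖_{S₁} ≤ a·b·‖Q‖_{S₁}. -/

import Mathlib

open scoped InnerProductSpace

/-- A projection-valued spectral measure on a measurable space `(α, 𝔄)`, acting on a
complex Hilbert space `H`, bundled together with its bounded Borel functional calculus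
`integral φ = ∫ φ dE`. -/
structure SpectralMeasure (α : Type*) [MeasurableSpace α]
    (H : Type*) [NormedAddCommGroup H] [InnerProductSpace ℂ H] [CompleteSpace H] where
  /-- the projection `E(s)` associated with a measurable set `s` -/
  proj : Set α → H →L[ℂ] H
  proj_idem : ∀ s, MeasurableSet s → (proj s).comp (proj s) = proj s
  proj_selfAdjoint : ∀ s, MeasurableSet s →
    ∀ x y : H, ⟪proj s x, y⟫_ℂ = ⟪x, proj s y⟫_ℂ
  proj_univ : proj Set.univ = ContinuousLinearMap.id ℂ H
  proj_inter : ∀ s t, MeasurableSet s → MeasurableSet t →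
    proj (s ∩ t) = (proj s).comp (proj t)
  proj_countablyAdditive : ∀ s : ℕ → Set α, (∀ n, MeasurableSet (s n)) →
    Pairwise (Function.onFun Disjoint s) →
    ∀ x : H, HasSum (fun n => proj (s n) x) (proj (⋃ n, s n) x)
  /-- the functional calculus `φ ↦ ∫ φ dE` for bounded measurable `φ` -/
  integral : (α → ℂ) → H →L[ℂ] H
  integral_indicator : ∀ s : Set α, MeasurableSet s →
    integral (s.indicator fun _ => 1) = proj s
  integral_add : ∀ φ ψ : α → ℂ, Measurable φ → Measurable ψ →
    integral (φ + ψ) = integral φ + integral ψ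
  integral_smul : ∀ (c : ℂ) (φ : α → ℂ), integral (c • φ) = c • integral φ
  integral_mul : ∀ φ ψ : α → ℂ, Measurable φ → Measurable ψ →
    integral (φ * ψ) = (integral φ).comp (integral ψ)
  integral_norm_le : ∀ (φ : α → ℂ) (M : ℝ), (∀ a, ‖φ a‖ ≤ M) → ‖integral φ‖ ≤ M

open scoped InnerProductSpace in
/-- `HasTraceNormLE T r` says `T` is trace class with trace norm at most `r`, via the
standard characterization of the trace norm as the infimum of `Σₙ ‖gₙ‖‖hₙ‖` over nuclear
representations `T u = Σₙ ⟪gₙ, u⟫ hₙ`. -/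
def HasTraceNormLE {H₁ H₂ : Type*}
    [NormedAddCommGroup H₁] [InnerProductSpace ℂ H₁]
    [NormedAddCommGroup H₂] [InnerProductSpace ℂ H₂]
    (T : H₂ →L[ℂ] H₁) (r : ℝ) : Prop :=
  ∃ (g : ℕ → H₂) (h : ℕ → H₁),
    (∀ u : H₂, HasSum (fun n => ⟪g n, u⟫_ℂ • h n) (T u)) ∧
    ∃ S, HasSum (fun n => ‖g n‖ * ‖h n‖) S ∧ S ≤ r

/-!
Writing `Q u = Σₖ ⟪gₖ, u⟫ hₖ`, the transformer has the nuclear representation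
`T u = Σₙₖ ⟪(∫ψ̄ₙ dE₂) gₖ, u⟫ (∫φₙ dE₁) hₖ`, because `(∫ψₙ dE₂)* = ∫ψ̄ₙ dE₂`. Its weight is
controlled by Cauchy–Schwarz in `n`: `Σₙ ‖(∫φₙ dE₁) f‖² = ⟪(∫ Σₙ |φₙ|² dE₁) f, f⟫ ≤ a² ‖f‖²`,
likewise for `ψ̄ₙ`, hence `Σₙₖ ‖(∫ψ̄ₙ dE₂) gₖ‖ ‖(∫φₙ dE₁) hₖ‖ ≤ a b Σₖ ‖gₖ‖ ‖hₖ‖`.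

The identity `(∫φ dE)* = ∫φ̄ dE` is not among the axioms of `SpectralMeasure`: it holds for
finitely-valued `φ` because the projections are self-adjoint, and passes to bounded measurable `φ`
by uniform approximation, to which the functional calculus is norm-continuous.
-/

open Filter Topology
open scoped InnerProduct

noncomputable def roundToGrid (n : ℕ) (z : ℂ) : ℂ :=
  ⟨⌊n * z.re⌋ / n, ⌊n * z.im⌋ / n⟩

lemma measurable_roundToGrid (n : ℕ) : Measurable (roundToGrid n) := by
  refine measurable_of_re_im ?_ ?_
  · exact (measurable_from_top.comp (Int.measurable_floor.comp
      (Complex.measurable_re.const_mul _))).div_const _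
  · exact (measurable_from_top.comp (Int.measurable_floor.comp
      (Complex.measurable_im.const_mul _))).div_const _

lemma abs_sub_floor_mul_div_le {n : ℕ} (hn : 0 < n) (t : ℝ) : |t - ⌊n * t⌋ / n| ≤ 1 / n := by
  have hn' : (0 : ℝ) < n := Nat.cast_pos.mpr hn
  have h : t - ⌊n * t⌋ / n = Int.fract (n * t) / n := by
    rw [Int.fract]; field_simp
  rw [h, abs_of_nonneg (div_nonneg (Int.fract_nonneg _) hn'.le)]
  gcongr
  exact (Int.fract_lt_one _).le

lemma dist_roundToGrid_le {n : ℕ} (hn : 0 < n) (z : ℂ) : dist z (roundToGrid n z) ≤ 2 / n := by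
  calc dist z (roundToGrid n z)
        ≤ |z.re - (roundToGrid n z).re| + |z.im - (roundToGrid n z).im| := by
          rw [dist_eq_norm]; exact Complex.norm_le_abs_re_add_abs_im _
    _ ≤ 1 / n + 1 / n :=
        add_le_add (abs_sub_floor_mul_div_le hn _) (abs_sub_floor_mul_div_le hn _)
    _ = 2 / n := by ring

lemma floor_mul_mem_Icc (n : ℕ) {t M : ℝ} (ht : |t| ≤ M) : ⌊n * t⌋ ∈ Set.Icc ⌊n * -M⌋ ⌊n * M⌋ := by
  rw [abs_le] at ht
  exact ⟨Int.floor_mono (by gcongr; exact ht.1), Int.floor_mono (by gcongr; exact ht.2)⟩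

lemma finite_range_roundToGrid_comp {α : Type*} {φ : α → ℂ} {M : ℝ} (hM : ∀ x, ‖φ x‖ ≤ M)
    (n : ℕ) :
    (Set.range (roundToGrid n ∘ φ)).Finite := by
  refine ((Set.finite_Icc ⌊n * -M⌋ ⌊n * M⌋).image2 (fun a b : ℤ => (⟨a / n, b / n⟩ : ℂ))
    (Set.finite_Icc ⌊n * -M⌋ ⌊n * M⌋)).subset ?_
  rintro _ ⟨x, rfl⟩
  exact ⟨_, floor_mul_mem_Icc n ((Complex.abs_re_le_norm _).trans (hM x)), _,
    floor_mul_mem_Icc n ((Complex.abs_im_le_norm _).trans (hM x)), rfl⟩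

lemma tendstoUniformly_roundToGrid_comp {α : Type*} (φ : α → ℂ) :
    TendstoUniformly (fun n => roundToGrid n ∘ φ) φ atTop := by
  rw [Metric.tendstoUniformly_iff]
  intro ε hε
  obtain ⟨N, hN⟩ := exists_nat_gt (2 / ε)
  filter_upwards [eventually_gt_atTop N] with n hn x
  have hn' : (0 : ℝ) < n := (Nat.cast_nonneg N).trans_lt (Nat.cast_lt.mpr hn)
  refine (dist_roundToGrid_le (Nat.cast_pos.mp hn') _).trans_lt ?_
  rw [div_lt_iff₀ hn', ← div_lt_iff₀' hε]
  exact hN.trans (Nat.cast_lt.mpr hn)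

lemma Set.Finite.comp_eq_sum_indicator {α : Type*} {φ : α → ℂ} (hφ : (Set.range φ).Finite)
    (c : ℂ → ℂ) :
    c ∘ φ = ∑ v ∈ hφ.toFinset, c v • (φ ⁻¹' {v}).indicator fun _ => 1 := by
  ext x
  rw [Finset.sum_apply, Finset.sum_eq_single (φ x)]
  · simp
  · intro v _ hv
    simp [hv.symm]
  · simp

namespace SpectralMeasure

variable {α : Type*} [MeasurableSpace α] {H : Type*} [NormedAddCommGroup H]
  [InnerProductSpace ℂ H] [CompleteSpace H] (E : SpectralMeasure α H)

lemma integral_zero : E.integral 0 = 0 := by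
  simpa using E.integral_smul 0 0

lemma integral_sub {φ ψ : α → ℂ} (hφ : Measurable φ) (hψ : Measurable ψ) :
    E.integral (φ - ψ) = E.integral φ - E.integral ψ := by
  rw [sub_eq_add_neg, ← neg_one_smul ℂ ψ, E.integral_add _ _ hφ (hψ.const_smul _),
    E.integral_smul, neg_one_smul, sub_eq_add_neg]

lemma integral_finset_sum {ι : Type*} (s : Finset ι) {φ : ι → α → ℂ}
    (hφ : ∀ i ∈ s, Measurable (φ i)) :
    E.integral (∑ i ∈ s, φ i) = ∑ i ∈ s, E.integral (φ i) := by
  classical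
  induction s using Finset.induction_on with
  | empty => simpa using E.integral_zero
  | insert i s hi ih =>
    rw [Finset.forall_mem_insert] at hφ
    have hsum : Measurable (∑ j ∈ s, φ j) :=
      Finset.sum_induction _ Measurable (fun _ _ => Measurable.add) measurable_const hφ.2
    rw [Finset.sum_insert hi, Finset.sum_insert hi, E.integral_add _ _ hφ.1 hsum, ih hφ.2]

lemma dist_integral_le {φ ψ : α → ℂ} (hφ : Measurable φ) (hψ : Measurable ψ) {ε : ℝ}
    (h : ∀ x, dist (φ x) (ψ x) ≤ ε) : dist (E.integral φ) (E.integral ψ) ≤ ε := by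
  rw [dist_eq_norm, ← E.integral_sub hφ hψ]
  exact E.integral_norm_le _ _ fun x => by simpa [dist_eq_norm] using h x

lemma tendsto_integral_of_tendstoUniformly {F : ℕ → α → ℂ} {φ : α → ℂ}
    (hF : ∀ n, Measurable (F n)) (hφ : Measurable φ) (h : TendstoUniformly F φ atTop) :
    Tendsto (fun n => E.integral (F n)) atTop (𝓝 (E.integral φ)) := by
  rw [Metric.tendsto_nhds]
  intro ε hε
  filter_upwards [Metric.tendstoUniformly_iff.mp h (ε / 2) (half_pos hε)] with n hn
  exact (E.dist_integral_le (hF n) hφ fun x => (dist_comm _ _).trans_le (hn x).le).trans_lt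
    (half_lt_self hε)

lemma adjoint_proj {s : Set α} (hs : MeasurableSet s) : (E.proj s)† = E.proj s :=
  ((ContinuousLinearMap.eq_adjoint_iff _ _).mpr (E.proj_selfAdjoint s hs)).symm

lemma integral_comp_eq_sum_proj {φ : α → ℂ} (hφm : Measurable φ) (hφ : (Set.range φ).Finite)
    (c : ℂ → ℂ) : E.integral (c ∘ φ) = ∑ v ∈ hφ.toFinset, c v • E.proj (φ ⁻¹' {v}) := by
  have hv : ∀ v : ℂ, MeasurableSet (φ ⁻¹' {v}) := fun v => hφm (measurableSet_singleton v)
  rw [hφ.comp_eq_sum_indicator, E.integral_finset_sum _ fun v _ =>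
    (measurable_const.indicator (hv v)).const_smul _]
  refine Finset.sum_congr rfl fun v _ => ?_
  rw [E.integral_smul, E.integral_indicator _ (hv v)]

lemma adjoint_integral_of_finite_range {φ : α → ℂ} (hφm : Measurable φ)
    (hφ : (Set.range φ).Finite) : (E.integral φ)† = E.integral (star φ) := by
  have h := E.integral_comp_eq_sum_proj hφm hφ
  calc (E.integral φ)† = (E.integral (id ∘ φ))† := rfl
    _ = ∑ v ∈ hφ.toFinset, star v • E.proj (φ ⁻¹' {v}) := by
        rw [h id, map_sum]
        refine Finset.sum_congr rfl fun v _ => ?_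
        rw [LinearIsometryEquiv.map_smulₛₗ, E.adjoint_proj (hφm (measurableSet_singleton v))]
        rfl
    _ = E.integral (star φ) := (h star).symm

lemma adjoint_integral {φ : α → ℂ} (hφ : Measurable φ) {M : ℝ} (hM : ∀ x, ‖φ x‖ ≤ M) :
    (E.integral φ)† = E.integral (star φ) := by
  have hF : ∀ n, Measurable (roundToGrid n ∘ φ) := fun n => (measurable_roundToGrid n).comp hφ
  have hlim := E.tendsto_integral_of_tendstoUniformly hF hφ (tendstoUniformly_roundToGrid_comp φ)
  have hlim_star := E.tendsto_integral_of_tendstoUniformly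
    (fun n => continuous_star.measurable.comp (hF n)) (continuous_star.measurable.comp hφ)
    (Complex.isometry_conj.uniformContinuous.comp_tendstoUniformly
      (tendstoUniformly_roundToGrid_comp φ))
  refine tendsto_nhds_unique (((ContinuousLinearMap.adjoint.continuous.tendsto _).comp
    hlim).congr fun n => ?_) hlim_star
  exact E.adjoint_integral_of_finite_range (hF n) (finite_range_roundToGrid_comp hM n)

lemma sum_norm_integral_apply_sq_le {ι : Type*} (s : Finset ι) {φ : ι → α → ℂ}
    (hφ : ∀ i ∈ s, Measurable (φ i)) {C : ℝ} (hC : ∀ x, ∑ i ∈ s, ‖φ i x‖ ^ 2 ≤ C) (f : H) :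
    ∑ i ∈ s, ‖E.integral (φ i) f‖ ^ 2 ≤ C * ‖f‖ ^ 2 := by
  set P := E.integral fun x => ((∑ i ∈ s, ‖φ i x‖ ^ 2 : ℝ) : ℂ)
  have hP : ‖P‖ ≤ C := E.integral_norm_le _ _ fun x => by
    rw [Complex.norm_real, Real.norm_of_nonneg (by positivity)]
    exact hC x
  have hbound : ∀ i ∈ s, ∀ x, ‖φ i x‖ ≤ √C := fun i hi x =>
    (le_abs_self _).trans <| Real.abs_le_sqrt <|
      (Finset.single_le_sum (fun j _ => sq_nonneg ‖φ j x‖) hi).trans (hC x)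
  have hstar : ∀ i ∈ s, Measurable (star (φ i)) := fun i hi =>
    continuous_star.measurable.comp (hφ i hi)
  have hsum : ∑ i ∈ s, (E.integral (φ i))† ∘L E.integral (φ i) = P := by
    rw [Finset.sum_congr rfl fun i hi => by
        rw [E.adjoint_integral (hφ i hi) (hbound i hi),
          ← E.integral_mul _ _ (hstar i hi) (hφ i hi)],
      ← E.integral_finset_sum _ fun i hi => (hstar i hi).mul (hφ i hi)]
    congr 1
    ext x
    simp [Finset.sum_apply, Complex.conj_mul']
  calc ∑ i ∈ s, ‖E.integral (φ i) f‖ ^ 2 = RCLike.re ⟪P f, f⟫_ℂ := by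
        simp_rw [ContinuousLinearMap.apply_norm_sq_eq_inner_adjoint_left, ← map_sum, ← sum_inner,
          ← _root_.sum_apply, hsum]
    _ ≤ ‖P f‖ * ‖f‖ := re_inner_le_norm _ _
    _ ≤ ‖P‖ * ‖f‖ * ‖f‖ := by gcongr; exact P.le_opNorm f
    _ ≤ C * ‖f‖ ^ 2 := by rw [mul_assoc, ← sq]; gcongr

end SpectralMeasure

lemma sum_product_mul_le_of_sum_sq_le {ι κ : Type*} {u v : ι × κ → ℝ} {w z : κ → ℝ}
    (hw : 0 ≤ w) (hz : 0 ≤ z)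
    (hu : ∀ (s : Finset ι) k, ∑ i ∈ s, u (i, k) ^ 2 ≤ w k ^ 2)
    (hv : ∀ (s : Finset ι) k, ∑ i ∈ s, v (i, k) ^ 2 ≤ z k ^ 2) (s : Finset ι) (t : Finset κ) :
    ∑ p ∈ s ×ˢ t, u p * v p ≤ ∑ k ∈ t, w k * z k := by
  rw [Finset.sum_product_right]
  refine Finset.sum_le_sum fun k _ => (Real.sum_mul_le_sqrt_mul_sqrt s _ _).trans ?_
  have hsqrt : ∀ {x y : ℝ}, 0 ≤ y → x ≤ y ^ 2 → √x ≤ y := fun hy h =>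
    Real.sqrt_le_iff.mpr ⟨hy, h⟩
  exact mul_le_mul (hsqrt (hw k) (hu s k)) (hsqrt (hz k) (hv s k)) (Real.sqrt_nonneg _) (hw k)

section TraceClass

variable {H₁ H₂ : Type*} [NormedAddCommGroup H₁] [InnerProductSpace ℂ H₁]
  [NormedAddCommGroup H₂] [InnerProductSpace ℂ H₂]

lemma hasTraceNormLE_of_hasSum {ι : Type*} [Denumerable ι] {T : H₂ →L[ℂ] H₁}
    (g : ι → H₂) (h : ι → H₁) (hT : ∀ u, HasSum (fun i => ⟪g i, u⟫_ℂ • h i) (T u)) {S r : ℝ}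
    (hS : HasSum (fun i => ‖g i‖ * ‖h i‖) S) (hSr : S ≤ r) : HasTraceNormLE T r :=
  let e := (Denumerable.eqv ι).symm
  ⟨g ∘ e, h ∘ e, fun u => e.hasSum_iff.mpr (hT u), S, e.hasSum_iff.mpr hS, hSr⟩

theorem HasTraceNormLE.of_hasSum_inner_comp_comp [CompleteSpace H₁] [CompleteSpace H₂]
    {K₁ K₂ : Type*} [NormedAddCommGroup K₁] [InnerProductSpace ℂ K₁]
    [NormedAddCommGroup K₂] [InnerProductSpace ℂ K₂] [CompleteSpace K₂]
    {Q : K₂ →L[ℂ] K₁} {r : ℝ} (hQ : HasTraceNormLE Q r)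
    (A : ℕ → K₁ →L[ℂ] H₁) (B : ℕ → H₂ →L[ℂ] K₂) {a b : ℝ} (ha : 0 ≤ a) (hb : 0 ≤ b)
    (hA : ∀ (s : Finset ℕ) x, ∑ n ∈ s, ‖A n x‖ ^ 2 ≤ a ^ 2 * ‖x‖ ^ 2)
    (hB : ∀ (s : Finset ℕ) y, ∑ n ∈ s, ‖((B n)†) y‖ ^ 2 ≤ b ^ 2 * ‖y‖ ^ 2)
    {T : H₂ →L[ℂ] H₁} (hT : ∀ u v, HasSum (fun n => ⟪A n (Q (B n u)), v⟫_ℂ) ⟪T u, v⟫_ℂ) :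
    HasTraceNormLE T (a * b * r) := by
  obtain ⟨g, h, hQgh, S, hS, hSr⟩ := hQ
  set G : ℕ × ℕ → H₂ := fun p => ((B p.1)†) (g p.2)
  set K : ℕ × ℕ → H₁ := fun p => A p.1 (h p.2)
  have hGK : ∀ P : Finset (ℕ × ℕ), ∑ p ∈ P, ‖G p‖ * ‖K p‖ ≤ a * b * S := by
    intro P
    calc ∑ p ∈ P, ‖G p‖ * ‖K p‖
        ≤ ∑ p ∈ P.image Prod.fst ×ˢ P.image Prod.snd, ‖G p‖ * ‖K p‖ :=
          Finset.sum_le_sum_of_subset_of_nonneg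
            (fun p hp => Finset.mem_product.mpr
              ⟨Finset.mem_image_of_mem _ hp, Finset.mem_image_of_mem _ hp⟩)
            fun _ _ _ => by positivity
      _ ≤ ∑ k ∈ P.image Prod.snd, (b * ‖g k‖) * (a * ‖h k‖) :=
          sum_product_mul_le_of_sum_sq_le (fun k => by positivity) (fun k => by positivity)
            (fun s k => (hB s (g k)).trans_eq (mul_pow _ _ _).symm)
            (fun s k => (hA s (h k)).trans_eq (mul_pow _ _ _).symm) _ _
      _ = a * b * ∑ k ∈ P.image Prod.snd, ‖g k‖ * ‖h k‖ := by
          rw [Finset.mul_sum]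
          exact Finset.sum_congr rfl fun k _ => by ring
      _ ≤ a * b * S := by
          gcongr
          exact sum_le_hasSum _ (fun _ _ => by positivity) hS
  have hGK_summable : Summable fun p => ‖G p‖ * ‖K p‖ :=
    summable_of_sum_le (fun p => by positivity) hGK
  refine hasTraceNormLE_of_hasSum G K (fun u => ?_) hGK_summable.hasSum
    ((hGK_summable.tsum_le_of_sum_le hGK).trans (by gcongr))
  obtain ⟨W, hW⟩ : Summable fun p => ⟪G p, u⟫_ℂ • K p :=
    (hGK_summable.mul_right ‖u‖).of_norm_bounded fun p => by
      rw [norm_smul, mul_right_comm]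
      gcongr
      exact norm_inner_le_norm _ _
  have hfiber : ∀ n, HasSum (fun k => ⟪G (n, k), u⟫_ℂ • K (n, k)) (A n (Q (B n u))) := fun n => by
    simpa only [G, K, ContinuousLinearMap.adjoint_inner_left, map_smul] using
      (A n).hasSum (hQgh (B n u))
  have hWT : W = T u := ext_inner_right ℂ fun v =>
    ((innerSLFlip ℂ v).hasSum (hW.prod_fiberwise hfiber)).unique (hT u v)
  rwa [← hWT]

end TraceClass

/-- Let `E₁`, `E₂` be spectral measures on `H₁`, `H₂` and let `Φ` admit a
Haagerup representation `Φ(x,y) = Σₙ φₙ(x)ψₙ(y)` with `Σ|φₙ|² ≤ a²`, `Σ|ψₙ|² ≤ b²`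
pointwise. Then the transformer `Q ↦ ∬ Φ dE₁ Q dE₂ := Σₙ (∫φₙ dE₁) Q (∫ψₙ dE₂)`
(the weak-operator sum, called `T` here) maps the trace class into itself with
`‖∬ Φ dE₁ Q dE₂‖_{S₁} ≤ a·b·‖Q‖_{S₁}`. -/
theorem haagerup_schur_multiplier_trace_class
    {X Y : Type*} [MeasurableSpace X] [MeasurableSpace Y]
    {H₁ H₂ : Type*} [NormedAddCommGroup H₁] [InnerProductSpace ℂ H₁] [CompleteSpace H₁]
    [NormedAddCommGroup H₂] [InnerProductSpace ℂ H₂] [CompleteSpace H₂]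
    (E₁ : SpectralMeasure X H₁) (E₂ : SpectralMeasure Y H₂)
    (φ : ℕ → X → ℂ) (ψ : ℕ → Y → ℂ)
    (hφm : ∀ n, Measurable (φ n)) (hψm : ∀ n, Measurable (ψ n))
    (a b : ℝ) (ha : 0 ≤ a) (hb : 0 ≤ b)
    (hφ : ∀ x, ∃ S, HasSum (fun n => ‖φ n x‖ ^ 2) S ∧ S ≤ a ^ 2)
    (hψ : ∀ y, ∃ S, HasSum (fun n => ‖ψ n y‖ ^ 2) S ∧ S ≤ b ^ 2)
    (Q : H₂ →L[ℂ] H₁) (r : ℝ) (hQ : HasTraceNormLE Q r)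
    (T : H₂ →L[ℂ] H₁)
    (hT : ∀ u : H₂, ∀ v : H₁,
      HasSum (fun n => ⟪(E₁.integral (φ n)) (Q ((E₂.integral (ψ n)) u)), v⟫_ℂ)
        ⟪T u, v⟫_ℂ) :
    HasTraceNormLE T (a * b * r) := by
  have hφs : ∀ s x, ∑ n ∈ s, ‖φ n x‖ ^ 2 ≤ a ^ 2 := fun s x => by
    obtain ⟨S, hS, hSa⟩ := hφ x
    exact (sum_le_hasSum s (fun _ _ => by positivity) hS).trans hSa
  have hψs : ∀ s y, ∑ n ∈ s, ‖ψ n y‖ ^ 2 ≤ b ^ 2 := fun s y => by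
    obtain ⟨S, hS, hSb⟩ := hψ y
    exact (sum_le_hasSum s (fun _ _ => by positivity) hS).trans hSb
  have hψ_le : ∀ n y, ‖ψ n y‖ ≤ b := fun n y =>
    (sq_le_sq₀ (norm_nonneg _) hb).mp (by simpa using hψs {n} y)
  refine hQ.of_hasSum_inner_comp_comp (fun n => E₁.integral (φ n)) (fun n => E₂.integral (ψ n))
    ha hb (fun s f => E₁.sum_norm_integral_apply_sq_le s (fun n _ => hφm n) (hφs s) f)
    (fun s y => ?_) hT
  rw [Finset.sum_congr rfl fun n _ => by rw [E₂.adjoint_integral (hψm n) (hψ_le n)]]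
  exact E₂.sum_norm_integral_apply_sq_le s (fun n _ => continuous_star.measurable.comp (hψm n))
    (by simpa only [Function.comp_apply, Pi.star_apply, norm_star] using hψs s) y
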